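/- Let `t` be a valid Patricia trie and `π` a position with `subtreeAt t π = some (node s c₀ c₁)` such that for some bit `b` the child `c_b` equals `leaf v`; write `u'` for the other child. Then `replaceAt t π u'` is valid and `leafLabels (replaceAt t π u') = leafLabels t \ {v}`. (Sequential correctness of the paper's delete operation: Case 2 of Invariant 1 together with Lemma `successful-del-lem`.) -/

import Mathlib

inductive PTrie : Type
  | leaf (s : List Bool) : PTrie
  | node (s : List Bool) (l r : PTrie) : PTrie

/-- Label at the root of a trie. -/
def lbl : PTrie → List Bool
  | .leaf s => s
  | .node s _ _ => s

/-- A trie is valid if for every internal node `node s l r`,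
`s ++ [false]` is a prefix of `lbl l` and `s ++ [true]` is a prefix of `lbl r`. -/
def Valid : PTrie → Prop
  | .leaf _ => True
  | .node s l r => ((s ++ [false]) <+: lbl l) ∧ ((s ++ [true]) <+: lbl r) ∧ Valid l ∧ Valid r

/-- Subtree at a position: descend left on `false`, right on `true`. -/
def subtreeAt : PTrie → List Bool → Option PTrie
  | t, [] => some t
  | .leaf _, _ :: _ => none
  | .node _ l r, b :: π => subtreeAt (if b then r else l) π

/-- Set of binary strings appearing at the leaves. -/
def leafLabels : PTrie → Set (List Bool)
  | .leaf s => {s}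
  | .node _ l r => leafLabels l ∪ leafLabels r

/-- Sequential search. -/
def search (v : List Bool) : PTrie → PTrie
  | .leaf s => .leaf s
  | .node s l r =>
    if s <+: v ∧ s ≠ v then
      (if v.getD s.length false then search v r else search v l)
    else .node s l r

/-- Position of the node returned by `search`. -/
def searchPos (v : List Bool) : PTrie → List Bool
  | .leaf _ => []
  | .node s l r =>
    if s <+: v ∧ s ≠ v then
      (if v.getD s.length false then true :: searchPos v r else false :: searchPos v l)
    else []

/-- Replace the subtree at a position. -/
def replaceAt : PTrie → List Bool → PTrie → PTrie
  | _, [], u => u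
  | .leaf s, _ :: _, _ => .leaf s
  | .node s l r, b :: π, u =>
    if b then .node s l (replaceAt r π u) else .node s (replaceAt l π u) r

/-- Longest common prefix of two binary strings. -/
def lcp : List Bool → List Bool → List Bool
  | a :: as, b :: bs => if a = b then a :: lcp as bs else []
  | _, _ => []

/-- Join two tries under a new internal node labelled by the
longest common prefix of their labels. -/
def join (t₁ t₂ : PTrie) : PTrie :=
  if (lbl t₁).getD (lcp (lbl t₁) (lbl t₂)).length true then
    .node (lcp (lbl t₁) (lbl t₂)) t₂ t₁
  else
    .node (lcp (lbl t₁) (lbl t₂)) t₁ t₂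

/-- Sequential insert. -/
def insertT (v : List Bool) : PTrie → PTrie
  | .node s l r =>
    if s <+: v ∧ s ≠ v then
      (if v.getD s.length false then .node s l (insertT v r) else .node s (insertT v l) r)
    else join (.node s l r) (.leaf v)
  | .leaf s => join (.leaf s) (.leaf v)

/-! In a valid trie every leaf label extends the label of each node above it, so the leaves under
`node s c₀ c₁` split into those extending `s ++ [false]` and those extending `s ++ [true]`; in
particular sibling subtrees share no leaf. Splicing out the node and its leaf child `leaf v`
therefore removes `v` and nothing else, and the surviving child's label still extends `s`, hence
every prefix constraint imposed from above. -/

theorem Valid.lbl_prefix_of_mem_leafLabels {t : PTrie} (ht : Valid t) {w : List Bool}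
    (hw : w ∈ leafLabels t) : lbl t <+: w := by
  induction t with
  | leaf s =>
    rw [leafLabels, Set.mem_singleton_iff] at hw
    exact hw ▸ List.prefix_refl s
  | node s l r ihl ihr =>
    obtain ⟨hl, hr, vl, vr⟩ := ht
    rcases hw with hw | hw
    · exact ((List.prefix_append s [false]).trans hl).trans (ihl vl hw)
    · exact ((List.prefix_append s [true]).trans hr).trans (ihr vr hw)

theorem Valid.disjoint_leafLabels {s : List Bool} {l r : PTrie} (h : Valid (.node s l r)) :
    Disjoint (leafLabels l) (leafLabels r) := by
  obtain ⟨hl, hr, vl, vr⟩ := h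
  refine Set.disjoint_left.2 fun w hwl hwr => ?_
  have h₀ : s ++ [false] <+: w := hl.trans (vl.lbl_prefix_of_mem_leafLabels hwl)
  have h₁ : s ++ [true] <+: w := hr.trans (vr.lbl_prefix_of_mem_leafLabels hwr)
  simpa using List.prefix_of_prefix_length_le h₀ h₁ (by simp)

theorem Valid.leafLabels_node_diff_sibling {s : List Bool} {c₀ c₁ : PTrie}
    (h : Valid (.node s c₀ c₁)) (b : Bool) :
    leafLabels (.node s c₀ c₁) \ leafLabels (if b then c₀ else c₁) =
      leafLabels (if b then c₁ else c₀) := by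
  cases b <;> simp only [Bool.false_eq_true, ↓reduceIte, leafLabels]
  · rw [Set.union_sdiff_right, sdiff_eq_left.2 h.disjoint_leafLabels]
  · rw [Set.union_sdiff_left, sdiff_eq_left.2 h.disjoint_leafLabels.symm]

theorem Valid.of_subtreeAt {π : List Bool} {t u : PTrie} (ht : Valid t)
    (hsub : subtreeAt t π = some u) : Valid u := by
  induction π generalizing t with
  | nil => exact Option.some.inj hsub ▸ ht
  | cons b π ih =>
    cases t with
    | leaf => simp [subtreeAt] at hsub
    | node s l r =>
      obtain ⟨-, -, vl, vr⟩ := ht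
      cases b
      exacts [ih vl hsub, ih vr hsub]

theorem leafLabels_subset_of_subtreeAt {π : List Bool} {t u : PTrie}
    (hsub : subtreeAt t π = some u) : leafLabels u ⊆ leafLabels t := by
  induction π generalizing t with
  | nil => exact (Option.some.inj hsub).symm ▸ subset_rfl
  | cons b π ih =>
    cases t with
    | leaf => simp [subtreeAt] at hsub
    | node s l r =>
      cases b
      exacts [(ih hsub).trans Set.subset_union_left, (ih hsub).trans Set.subset_union_right]

theorem lbl_prefix_lbl_replaceAt {π : List Bool} {t u u' : PTrie}
    (hsub : subtreeAt t π = some u) (h : lbl u <+: lbl u') :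
    lbl t <+: lbl (replaceAt t π u') := by
  cases π with
  | nil => cases Option.some.inj hsub; rwa [replaceAt.eq_1]
  | cons b π =>
    cases t with
    | leaf => simp [subtreeAt] at hsub
    | node s l r => cases b <;> exact List.prefix_refl s

theorem Valid.replaceAt_of_lbl_prefix {π : List Bool} {t u u' : PTrie} (ht : Valid t)
    (hsub : subtreeAt t π = some u) (hu' : Valid u') (h : lbl u <+: lbl u') :
    Valid (replaceAt t π u') := by
  induction π generalizing t with
  | nil => rwa [replaceAt.eq_1]
  | cons b π ih =>
    cases t with
    | leaf => simp [subtreeAt] at hsub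
    | node s l r =>
      obtain ⟨hl, hr, vl, vr⟩ := ht
      cases b
      · exact ⟨hl.trans (lbl_prefix_lbl_replaceAt hsub h), hr, ih vl hsub, vr⟩
      · exact ⟨hl, hr.trans (lbl_prefix_lbl_replaceAt hsub h), vl, ih vr hsub⟩

/-- Sibling subtrees of a valid trie have disjoint leaf labels, so the labels removed together
with `u` occur nowhere else in `t`. -/
theorem Valid.leafLabels_replaceAt {π : List Bool} {t u u' : PTrie} (ht : Valid t)
    (hsub : subtreeAt t π = some u) (hu' : leafLabels u' ⊆ leafLabels u) :
    leafLabels (replaceAt t π u') = leafLabels t \ (leafLabels u \ leafLabels u') := by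
  induction π generalizing t with
  | nil =>
    cases Option.some.inj hsub
    rw [replaceAt.eq_1, Set.sdiff_sdiff_cancel_left hu']
  | cons b π ih =>
    cases t with
    | leaf => simp [subtreeAt] at hsub
    | node s l r =>
      have hdisj := ht.disjoint_leafLabels
      obtain ⟨-, -, vl, vr⟩ := ht
      have hD : ∀ c, subtreeAt c π = some u → leafLabels u \ leafLabels u' ⊆ leafLabels c :=
        fun _ h => Set.sdiff_subset.trans (leafLabels_subset_of_subtreeAt h)
      cases b
      · rw [replaceAt, if_neg Bool.false_ne_true, leafLabels, leafLabels, ih vl hsub,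
          Set.union_sdiff_distrib, sdiff_eq_left.2 (hdisj.symm.mono_right (hD l hsub))]
      · rw [replaceAt, if_pos rfl, leafLabels, leafLabels, ih vr hsub,
          Set.union_sdiff_distrib, sdiff_eq_left.2 (hdisj.mono_right (hD r hsub))]

/-- Sequential correctness of the delete operation. -/
theorem delete_correct (t c₀ c₁ : PTrie) (s v : List Bool)
    (π : List Bool) (b : Bool)
    (hv : Valid t)
    (hsub : subtreeAt t π = some (PTrie.node s c₀ c₁))
    (hb : (if b then c₁ else c₀) = PTrie.leaf v) :
    Valid (replaceAt t π (if b then c₀ else c₁)) ∧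
    leafLabels (replaceAt t π (if b then c₀ else c₁)) = leafLabels t \ {v} := by
  have hu : Valid (.node s c₀ c₁) := hv.of_subtreeAt hsub
  have hdiff : leafLabels (.node s c₀ c₁) \ leafLabels (if b then c₀ else c₁) = {v} := by
    rw [hu.leafLabels_node_diff_sibling, hb, leafLabels]
  have hsubset : leafLabels (if b then c₀ else c₁) ⊆ leafLabels (.node s c₀ c₁) := by
    cases b
    exacts [Set.subset_union_right, Set.subset_union_left]
  obtain ⟨h₀, h₁, v₀, v₁⟩ := hu
  have hvalid : Valid (if b then c₀ else c₁) := by cases b <;> assumption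
  have hlbl : lbl (.node s c₀ c₁) <+: lbl (if b then c₀ else c₁) := by
    cases b
    exacts [(List.prefix_append s _).trans h₁, (List.prefix_append s _).trans h₀]
  refine ⟨hv.replaceAt_of_lbl_prefix hsub hvalid hlbl, ?_⟩
  rw [hv.leafLabels_replaceAt hsub hsubset, hdiff]
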